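/- arXiv:1401.5942 — 4 statements merged into one kernel-verified Lean document; each statement's English description precedes it below -/
import Mathlib

section
/- Let W : [0,∞) → ℝ be integrable on bounded intervals with W(τ) ≤ V_∞ for all τ, and suppose V_∞ - W(t) ≤ γ e^{-C₊ t} + A γ³ / (1+t)^α with γ, C₊, A > 0 and α > 1, and V_∞ - W(τ) ≥ γ e^{-C₋ τ} with C₋ ≥ C₊ > 0. Define W̄(t) = (1/t) ∫₀ᵗ W(τ) dτ for t > 0. Then for all sufficiently small γ (equivalently, for all t exceeding a threshold depending on the constants) one has W(t) > W̄(t). -/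
/-!
Put `D = V∞ - W`. For `t > 0` the claim `W̄(t) < W(t)` is equivalent to `t D(t) < ∫₀ᵗ D`.
The lower bound makes `D` positive, so `∫₀ᵗ D ≥ ∫₀¹ D > 0` once `t ≥ 1`, while the upper
bound forces `t D(t) → 0` because `α > 1`.
-/

open Real MeasureTheory Set Filter Topology

lemma tendsto_mul_exp_neg_mul_atTop {c : ℝ} (hc : 0 < c) :
    Tendsto (fun t : ℝ => t * exp (-c * t)) atTop (𝓝 0) := by
  simpa using tendsto_rpow_mul_exp_neg_mul_atTop_nhds_zero 1 c hc

lemma tendsto_mul_div_one_add_rpow_atTop {α : ℝ} (hα : 1 < α) :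
    Tendsto (fun t : ℝ => t / (1 + t) ^ α) atTop (𝓝 0) := by
  have hpow : Tendsto (fun t : ℝ => (1 + t) ^ (1 - α)) atTop (𝓝 0) := by
    simpa [Function.comp_def, neg_sub] using
      (tendsto_rpow_neg_atTop (by linarith : 0 < α - 1)).comp
        (tendsto_atTop_add_const_left atTop 1 tendsto_id)
  refine squeeze_zero' ?_ ?_ hpow
  · filter_upwards [eventually_ge_atTop 0] with t ht
    positivity
  · filter_upwards [eventually_ge_atTop 0] with t ht
    have h1t : 0 < 1 + t := by linarith
    rw [div_le_iff₀ (rpow_pos_of_pos h1t α), ← rpow_add h1t, sub_add_cancel, rpow_one]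
    linarith

lemma eventually_mul_lt_integral_of_pos {D : ℝ → ℝ}
    (hint : ∀ t, IntervalIntegrable D volume 0 t) (hpos : ∀ τ, 0 ≤ τ → 0 < D τ)
    (hlim : Tendsto (fun t => t * D t) atTop (𝓝 0)) :
    ∀ᶠ t in atTop, t * D t < ∫ τ in (0 : ℝ)..t, D τ := by
  have hc : 0 < ∫ τ in (0 : ℝ)..1, D τ :=
    intervalIntegral.intervalIntegral_pos_of_pos_on (hint 1)
      (fun τ hτ => hpos τ hτ.1.le) one_pos
  filter_upwards [hlim.eventually (gt_mem_nhds hc), eventually_ge_atTop 1] with t hsmall ht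
  refine hsmall.trans_le
    (intervalIntegral.integral_mono_interval le_rfl zero_le_one ht ?_ (hint t))
  filter_upwards [ae_restrict_mem measurableSet_Ioc] with τ hτ
  exact (hpos τ hτ.1.le).le

lemma average_lt_of_mul_sub_lt_integral_sub {W : ℝ → ℝ} {V t : ℝ} (ht : 0 < t)
    (hW : IntervalIntegrable W volume 0 t)
    (h : t * (V - W t) < ∫ τ in (0 : ℝ)..t, (V - W τ)) :
    (1 / t) * ∫ τ in (0 : ℝ)..t, W τ < W t := by
  rw [intervalIntegral.integral_sub intervalIntegrable_const hW,
    intervalIntegral.integral_const, sub_zero, smul_eq_mul] at h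
  rw [one_div_mul_eq_div, div_lt_iff₀ ht]
  linarith

theorem stmt0_general
    (W : ℝ → ℝ) (Vinf γ Cp Cm A α : ℝ)
    (hγ : 0 < γ) (hCp : 0 < Cp) (hα : 1 < α)
    (hint : ∀ a b : ℝ, IntervalIntegrable W volume a b)
    (hub : ∀ t : ℝ, 0 ≤ t → Vinf - W t ≤ γ * Real.exp (-Cp * t) + A * γ ^ 3 / (1 + t) ^ α)
    (hlb : ∀ τ : ℝ, 0 ≤ τ → γ * Real.exp (-Cm * τ) ≤ Vinf - W τ) :
    ∃ T : ℝ, ∀ t : ℝ, T < t → (1 / t) * ∫ τ in (0:ℝ)..t, W τ < W t := by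
  have hpos : ∀ τ, 0 ≤ τ → 0 < Vinf - W τ := fun τ hτ =>
    (mul_pos hγ (exp_pos _)).trans_le (hlb τ hτ)
  have hbound : Tendsto (fun t => t * (γ * exp (-Cp * t) + A * γ ^ 3 / (1 + t) ^ α))
      atTop (𝓝 0) := by
    have := ((tendsto_mul_exp_neg_mul_atTop hCp).const_mul γ).add
      ((tendsto_mul_div_one_add_rpow_atTop hα).const_mul (A * γ ^ 3))
    simp only [mul_zero, add_zero] at this
    refine this.congr fun t => ?_
    ring
  have hlim : Tendsto (fun t => t * (Vinf - W t)) atTop (𝓝 0) := by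
    refine squeeze_zero' ?_ ?_ hbound <;> filter_upwards [eventually_ge_atTop 0] with t ht
    · exact mul_nonneg ht (hpos t ht).le
    · exact mul_le_mul_of_nonneg_left (hub t ht) ht
  have hlt := eventually_mul_lt_integral_of_pos
    (fun t => intervalIntegrable_const.sub (hint 0 t)) hpos hlim
  obtain ⟨T, hT⟩ := eventually_atTop.mp (hlt.and (eventually_gt_atTop 0))
  refine ⟨T, fun t ht => ?_⟩
  obtain ⟨hmul_lt, ht0⟩ := hT t ht.le
  exact average_lt_of_mul_sub_lt_integral_sub ht0 (hint 0 t) hmul_lt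

theorem stmt0
    (W : ℝ → ℝ) (Vinf γ Cp Cm A α : ℝ)
    (hγ : 0 < γ) (hCp : 0 < Cp) (hCm : Cp ≤ Cm) (hA : 0 < A) (hα : 1 < α)
    (hint : ∀ a b : ℝ, IntervalIntegrable W volume a b)
    (hle : ∀ τ : ℝ, 0 ≤ τ → W τ ≤ Vinf)
    (hub : ∀ t : ℝ, 0 ≤ t → Vinf - W t ≤ γ * Real.exp (-Cp * t) + A * γ ^ 3 / (1 + t) ^ α)
    (hlb : ∀ τ : ℝ, 0 ≤ τ → γ * Real.exp (-Cm * τ) ≤ Vinf - W τ) :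
    ∃ T : ℝ, ∀ t : ℝ, T < t → (1 / t) * ∫ τ in (0:ℝ)..t, W τ < W t :=
  stmt0_general W Vinf γ Cp Cm A α hγ hCp hα hint hub hlb
end

section
/- Define F₀(V) = A [∫_{-∞}^{V} (v−V)² e^{-β v²} dv − ∫_{V}^{∞} (v−V)² e^{-β v²} dv] with A, β > 0. Then F₀ is twice differentiable with F₀''(V) = 2A [∫_{-∞}^{V} e^{-β v²} dv − ∫_{-∞}^{-V} e^{-β v²} dv], which is strictly positive for V > 0; hence F₀ is strictly convex on (0,∞). -/
open Real MeasureTheory Set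

/-!
The reflection `v ↦ -v` turns the integral over `[V, ∞)` into `G (-V)`, where
`G V = ∫_{-∞}^V (v - V)² e^{-βv²} dv`, so `F₀ V = A (G V - G (-V))`. Expanding `(v - V)²` writes
`G` through the partial moments `∫_{-∞}^V vᵏ e^{-βv²} dv`, and the fundamental theorem of calculus
gives `G' V = -2 ∫_{-∞}^V (v - V) e^{-βv²} dv` and `G'' V = 2 ∫_{-∞}^V e^{-βv²} dv`. Hence
`F₀'' V = A (G'' V - G'' (-V))`, which is positive for `V > 0` because `G''` is strictly
increasing.
-/

section PartialMoments

variable {f : ℝ → ℝ}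

theorem integral_sub_mul_eq {μ : Measure ℝ} (h0 : Integrable f μ)
    (h1 : Integrable (fun v => v * f v) μ) (c : ℝ) :
    ∫ v, (v - c) * f v ∂μ = ∫ v, v * f v ∂μ - c * ∫ v, f v ∂μ := by
  simp_rw [sub_mul]
  rw [integral_sub h1 (h0.const_mul c), integral_const_mul]

theorem integral_sub_sq_mul_eq {μ : Measure ℝ} (h0 : Integrable f μ)
    (h1 : Integrable (fun v => v * f v) μ) (h2 : Integrable (fun v => v ^ 2 * f v) μ) (c : ℝ) :
    ∫ v, (v - c) ^ 2 * f v ∂μ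
      = ∫ v, v ^ 2 * f v ∂μ - 2 * c * ∫ v, v * f v ∂μ + c ^ 2 * ∫ v, f v ∂μ := by
  have hexpand : (fun v => (v - c) ^ 2 * f v)
      = fun v => v ^ 2 * f v - 2 * c * (v * f v) + c ^ 2 * f v := by
    funext v
    ring
  have h21 : Integrable (fun v => v ^ 2 * f v - 2 * c * (v * f v)) μ := h2.sub (h1.const_mul _)
  rw [hexpand, integral_add h21 (h0.const_mul _),
    integral_sub h2 (h1.const_mul _), integral_const_mul, integral_const_mul]

theorem hasDerivAt_integral_Iic (hf : Integrable f) (hc : Continuous f) (x : ℝ) :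
    HasDerivAt (fun y => ∫ v in Iic y, f v) (f x) x := by
  have hsplit : (fun y => ∫ v in Iic y, f v)
      = fun y => (∫ v in Iic (0 : ℝ), f v) + ∫ v in (0 : ℝ)..y, f v := by
    funext y
    rw [← intervalIntegral.integral_Iic_sub_Iic hf.integrableOn hf.integrableOn]
    ring
  rw [hsplit]
  exact (intervalIntegral.integral_hasDerivAt_right hf.intervalIntegrable
    hc.aestronglyMeasurable.stronglyMeasurableAtFilter hc.continuousAt).const_add _

theorem hasDerivAt_integral_Iic_sub_mul (h0 : Integrable f)
    (h1 : Integrable fun v => v * f v) (hc : Continuous f) (x : ℝ) :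
    HasDerivAt (fun y => ∫ v in Iic y, (v - y) * f v) (-∫ v in Iic x, f v) x := by
  have hm0 := hasDerivAt_integral_Iic h0 hc x
  have hm1 := hasDerivAt_integral_Iic h1 (continuous_id.mul hc) x
  simp_rw [integral_sub_mul_eq h0.restrict h1.restrict]
  exact (hm1.sub ((hasDerivAt_id' x).mul hm0)).congr_deriv (by ring)

theorem hasDerivAt_integral_Iic_sub_sq_mul (h0 : Integrable f)
    (h1 : Integrable fun v => v * f v) (h2 : Integrable fun v => v ^ 2 * f v)
    (hc : Continuous f) (x : ℝ) :
    HasDerivAt (fun y => ∫ v in Iic y, (v - y) ^ 2 * f v)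
      (-2 * ∫ v in Iic x, (v - x) * f v) x := by
  have hm0 := hasDerivAt_integral_Iic h0 hc x
  have hm1 := hasDerivAt_integral_Iic h1 (continuous_id.mul hc) x
  have hm2 := hasDerivAt_integral_Iic h2 ((continuous_pow 2).mul hc) x
  simp_rw [integral_sub_sq_mul_eq h0.restrict h1.restrict h2.restrict,
    integral_sub_mul_eq h0.restrict h1.restrict]
  exact ((hm2.sub (((hasDerivAt_id' x).const_mul 2).mul hm1)).add
    ((hasDerivAt_pow 2 x).mul hm0)).congr_deriv (by ring)

theorem integral_Ici_sub_sq_mul_of_even (heven : ∀ v, f (-v) = f v) (x : ℝ) :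
    ∫ v in Ici x, (v - x) ^ 2 * f v = ∫ v in Iic (-x), (v - -x) ^ 2 * f v := by
  rw [integral_Ici_eq_integral_Ioi, ← integral_comp_neg_Ioi]
  congr 1
  funext v
  rw [heven]
  ring

theorem strictMono_integral_Iic (hf : Integrable f) (hpos : ∀ v, 0 < f v) :
    StrictMono fun x => ∫ v in Iic x, f v := by
  intro a b hab
  rw [← sub_pos, intervalIntegral.integral_Iic_sub_Iic hf.integrableOn hf.integrableOn]
  exact intervalIntegral.intervalIntegral_pos_of_pos hf.intervalIntegrable hpos hab

end PartialMoments

theorem stmt10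
    (A β : ℝ) (hA : 0 < A) (hβ : 0 < β)
    (F₀ : ℝ → ℝ)
    (hF₀ : ∀ V : ℝ, F₀ V =
      A * ((∫ v in Set.Iic V, (v - V) ^ 2 * Real.exp (-β * v ^ 2))
        - ∫ v in Set.Ici V, (v - V) ^ 2 * Real.exp (-β * v ^ 2))) :
    (∀ V : ℝ,
      HasDerivAt (deriv F₀)
        (2 * A * ((∫ v in Set.Iic V, Real.exp (-β * v ^ 2))
          - ∫ v in Set.Iic (-V), Real.exp (-β * v ^ 2))) V) ∧
    (∀ V : ℝ, 0 < V →
      0 < 2 * A * ((∫ v in Set.Iic V, Real.exp (-β * v ^ 2))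
          - ∫ v in Set.Iic (-V), Real.exp (-β * v ^ 2))) ∧
    StrictConvexOn ℝ (Set.Ioi (0:ℝ)) F₀ := by
  set g : ℝ → ℝ := fun v => exp (-β * v ^ 2)
  have h0 : Integrable g := integrable_exp_neg_mul_sq hβ
  have h1 : Integrable fun v => v * g v := integrable_mul_exp_neg_mul_sq hβ
  have h2 : Integrable fun v => v ^ 2 * g v := by
    simpa only [rpow_two] using integrable_rpow_mul_exp_neg_mul_sq hβ (s := 2) (by norm_num)
  have hc : Continuous g := by fun_prop
  set G := fun y => ∫ v in Iic y, (v - y) ^ 2 * g v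
  set H := fun y => ∫ v in Iic y, (v - y) * g v
  set m := fun y => ∫ v in Iic y, g v
  have hF : F₀ = fun y => A * (G y - G (-y)) :=
    funext fun y => by rw [hF₀, integral_Ici_sub_sq_mul_of_even (fun v => by simp) y]
  have hF' (x : ℝ) : HasDerivAt F₀ (-2 * A * (H x + H (-x))) x := by
    have hG (y : ℝ) : HasDerivAt G (-2 * H y) y :=
      hasDerivAt_integral_Iic_sub_sq_mul h0 h1 h2 hc y
    rw [hF]
    exact (((hG x).sub ((hG (-x)).comp x (hasDerivAt_neg x))).const_mul A).congr_deriv (by ring)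
  have hF'' (x : ℝ) : HasDerivAt (deriv F₀) (2 * A * (m x - m (-x))) x := by
    have hH (y : ℝ) : HasDerivAt H (-m y) y := hasDerivAt_integral_Iic_sub_mul h0 h1 hc y
    rw [funext fun y => (hF' y).deriv]
    exact (((hH x).add ((hH (-x)).comp x (hasDerivAt_neg x))).const_mul (-2 * A)).congr_deriv
      (by ring)
  have hpos (x : ℝ) (hx : 0 < x) : 0 < 2 * A * (m x - m (-x)) :=
    mul_pos (by positivity)
      (sub_pos.2 (strictMono_integral_Iic h0 (fun v => exp_pos _) (by linarith)))
  refine ⟨hF'', hpos, strictConvexOn_of_deriv2_pos' (convex_Ioi 0) ?_ ?_⟩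
  · exact HasDerivAt.continuousOn fun x _ => hF' x
  · intro x hx
    show 0 < deriv (deriv F₀) x
    rw [(hF'' x).deriv]
    exact hpos x hx
end

section
/- Under the assumptions V_∞ − W(p) ≤ γ e^{-C₊ p} + A γ³/(1+p)^α (α > 1) and V_∞ − W(p) ≥ γ e^{-C₋ p} for all p ≥ 0, with 0 < C₊ ≤ C₋ and γ small, let f(s) = ∫ₛ^∞ (V_∞ − W(p)) dp and suppose s* ≥ 0 satisfies f(s*) = h for some h > 0. Then (1/C₋) log(γ/(h C₋)) ≤ s* ≤ (C γ / h)^{1/(α−1)} − 1, where C > 0 depends only on C₊, C₋, α, A (for γ sufficiently small). -/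
open Real MeasureTheory Set Filter

/-!
Integrating the pointwise bounds over `[s*, ∞)` squeezes `h = f(s*)` between
`γ e^{-C₋ s*} / C₋` and `γ e^{-C₊ s*} / C₊ + A γ³ (1 + s*)^{1-α} / (α - 1)`. The lower
bound is solved for `s*` by a logarithm. For the upper one, multiply by `(1 + s*)^{α-1}`:
the exponential beats the polynomial, `e^{-C₊ s} (1 + s)^{α-1} ≤ C₁`, and `γ³ ≤ γ` for
`γ ≤ 1`, so `h (1 + s*)^{α-1} ≤ C γ`.
-/

theorem integral_Ioi_add_rpow_of_lt {a c m : ℝ} (ha : a < -1) (hc : -m < c) :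
    ∫ x in Ioi c, (x + m) ^ a = -(c + m) ^ (a + 1) / (a + 1) := by
  have hd : ∀ x ∈ Ici c, HasDerivAt (fun t ↦ (t + m) ^ (a + 1) / (a + 1)) ((x + m) ^ a) x := by
    intro x hx
    convert! (((hasDerivAt_id _).add_const _).rpow_const _).div_const _ using 1
    · simp [show a + 1 ≠ 0 by linarith]
    exact Or.inl (by simp only [id]; linarith [mem_Ici.mp hx])
  have ht : Tendsto (fun t ↦ ((t + m) ^ (a + 1)) / (a + 1)) atTop (nhds (0 / (a + 1))) := by
    rw [← neg_neg (a + 1)]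
    exact (tendsto_rpow_neg_atTop (by linarith)).comp
      (tendsto_atTop_add_const_right _ m tendsto_id) |>.div_const _
  rw [integral_Ioi_of_hasDerivAt_of_nonneg' hd
    (fun t ht ↦ rpow_nonneg (by linarith [mem_Ioi.mp ht]) a) ht]
  ring

theorem rpow_le_mul_exp (β : ℝ) {c : ℝ} (hc : 0 < c) :
    ∃ K, 0 < K ∧ ∀ x : ℝ, 1 ≤ x → x ^ β ≤ K * exp (c * x) := by
  set n := ⌈β⌉₊
  refine ⟨n.factorial / c ^ n, by positivity, fun x hx ↦ ?_⟩
  calc x ^ β ≤ x ^ (n : ℝ) := rpow_le_rpow_of_exponent_le hx (Nat.le_ceil β)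
    _ = n.factorial / c ^ n * ((c * x) ^ n / n.factorial) := by
        rw [rpow_natCast, mul_pow]; field_simp
    _ ≤ n.factorial / c ^ n * exp (c * x) := by
        gcongr; exact pow_div_factorial_le_exp _ (by positivity) n

section TailIntegral

variable {f : ℝ → ℝ} {s γ c : ℝ}

theorem mul_exp_div_le_integral_Ioi (hc : 0 < c) (hf : IntegrableOn f (Ioi s))
    (hlow : ∀ p ∈ Ioi s, γ * exp (-c * p) ≤ f p) :
    γ * exp (-c * s) / c ≤ ∫ p in Ioi s, f p :=
  calc γ * exp (-c * s) / c = ∫ p in Ioi s, γ * exp (-c * p) := by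
        rw [integral_const_mul, integral_exp_mul_Ioi (by linarith)]; field_simp
    _ ≤ ∫ p in Ioi s, f p :=
        setIntegral_mono_on ((exp_neg_integrableOn_Ioi s hc).const_mul γ) hf
          measurableSet_Ioi hlow

theorem integral_Ioi_le_exp_add_rpow {B α : ℝ} (hc : 0 < c) (hα : 1 < α) (hs : -1 < s)
    (hf : IntegrableOn f (Ioi s))
    (hup : ∀ p ∈ Ioi s, f p ≤ γ * exp (-c * p) + B / (1 + p) ^ α) :
    ∫ p in Ioi s, f p ≤ γ * exp (-c * s) / c + B * (1 + s) ^ (1 - α) / (α - 1) := by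
  have hpow : ∀ p ∈ Ioi s, B / (1 + p) ^ α = B * (p + 1) ^ (-α) := fun p hp ↦ by
    rw [rpow_neg (by linarith [mem_Ioi.mp hp]), add_comm, div_eq_mul_inv]
  have hexp := (exp_neg_integrableOn_Ioi s hc).const_mul γ
  have hrpow := (integrableOn_add_rpow_Ioi_of_lt (a := -α) (m := 1) (by linarith)
    (by linarith)).const_mul B
  calc ∫ p in Ioi s, f p ≤ ∫ p in Ioi s, (γ * exp (-c * p) + B * (p + 1) ^ (-α)) :=
        setIntegral_mono_on hf (hexp.add hrpow) measurableSet_Ioi fun p hp ↦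
          (hup p hp).trans_eq (by rw [hpow p hp])
    _ = γ * exp (-c * s) / c + B * (1 + s) ^ (1 - α) / (α - 1) := by
        rw [integral_add hexp hrpow, integral_const_mul, integral_const_mul,
          integral_exp_mul_Ioi (by linarith), integral_Ioi_add_rpow_of_lt (by linarith)
          (by linarith), add_comm s, show -α + 1 = 1 - α by ring]
        have : 1 - α ≠ 0 := by linarith
        have : α - 1 ≠ 0 := by linarith
        field_simp
        ring

end TailIntegral

theorem inv_mul_log_le_of_mul_exp_div_le {c γ h s : ℝ} (hc : 0 < c) (hγ : 0 < γ) (hh : 0 < h)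
    (H : γ * exp (-c * s) / c ≤ h) : 1 / c * log (γ / (h * c)) ≤ s := by
  rw [div_le_iff₀ hc] at H
  rw [one_div, inv_mul_le_iff₀ hc, log_le_iff_le_exp (by positivity), div_le_iff₀ (by positivity)]
  calc γ = γ * exp (-c * s) * exp (c * s) := by rw [mul_assoc, ← exp_add]; simp
    _ ≤ h * c * exp (c * s) := by gcongr
    _ = exp (c * s) * (h * c) := mul_comm _ _

theorem le_rpow_sub_one_of_le_exp_add_rpow {c γ h s A α K : ℝ} (hc : 0 < c) (hα : 1 < α)
    (hA : 0 ≤ A) (hγ : 0 ≤ γ) (hγ1 : γ ≤ 1) (hh : 0 < h) (hs : -1 < s)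
    (hK : (1 + s) ^ (α - 1) ≤ K * exp (c * (1 + s)))
    (H : h ≤ γ * exp (-c * s) / c + A * γ ^ 3 * (1 + s) ^ (1 - α) / (α - 1)) :
    s ≤ ((K * exp c / c + A / (α - 1)) * γ / h) ^ (1 / (α - 1)) - 1 := by
  have hs1 : 0 < 1 + s := by linarith
  set P := (1 + s) ^ (α - 1)
  have hP : 0 < P := rpow_pos_of_pos hs1 _
  have hPinv : (1 + s) ^ (1 - α) = P⁻¹ := by rw [← rpow_neg hs1.le]; ring_nf
  have hexpP : exp (-c * s) * P ≤ K * exp c :=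
    calc exp (-c * s) * P ≤ exp (-c * s) * (K * exp (c * (1 + s))) := by gcongr
      _ = K * exp c := by rw [mul_left_comm, ← exp_add]; ring_nf
  have hγ3 : γ ^ 3 ≤ γ := pow_le_of_le_one hγ hγ1 (by norm_num)
  have hα1 : 0 < α - 1 := by linarith
  have hhP : h * P ≤ (K * exp c / c + A / (α - 1)) * γ :=
    calc h * P ≤ (γ * exp (-c * s) / c + A * γ ^ 3 * P⁻¹ / (α - 1)) * P := by
          rw [← hPinv]; gcongr
      _ = γ * (exp (-c * s) * P) / c + A * γ ^ 3 / (α - 1) := by field_simp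
      _ ≤ γ * (K * exp c) / c + A * γ / (α - 1) := by gcongr
      _ = (K * exp c / c + A / (α - 1)) * γ := by ring
  have hPle : P ≤ (K * exp c / c + A / (α - 1)) * γ / h := by
    rw [le_div_iff₀ hh]; linarith
  have : 1 + s ≤ ((K * exp c / c + A / (α - 1)) * γ / h) ^ (1 / (α - 1)) := by
    rwa [one_div, le_rpow_inv_iff_of_pos hs1.le (hP.le.trans hPle) hα1]
  linarith

theorem stmt15_general
    (Cp Cm A α : ℝ) (hCp : 0 < Cp) (hCm : Cp ≤ Cm) (hα : 1 < α) :
    ∃ C : ℝ, 0 < C ∧ ∃ γ₀ : ℝ, 0 < γ₀ ∧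
      ∀ (γ : ℝ), 0 < γ → γ < γ₀ →
      ∀ (W : ℝ → ℝ) (Vinf h sstar : ℝ),
        Measurable W →
        (∀ p : ℝ, 0 ≤ p →
          Vinf - W p ≤ γ * Real.exp (-Cp * p) + A * γ ^ 3 / (1 + p) ^ α) →
        (∀ p : ℝ, 0 ≤ p → γ * Real.exp (-Cm * p) ≤ Vinf - W p) →
        0 < h → 0 ≤ sstar →
        (∫ p in Set.Ici sstar, (Vinf - W p)) = h →
        (1 / Cm) * Real.log (γ / (h * Cm)) ≤ sstar ∧
          sstar ≤ (C * γ / h) ^ ((1:ℝ) / (α - 1)) - 1 := by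
  have hCm0 : 0 < Cm := hCp.trans_le hCm
  obtain ⟨K, hK, hKexp⟩ := rpow_le_mul_exp (α - 1) hCp
  refine ⟨K * exp Cp / Cp + max A 0 / (α - 1),
    add_pos_of_pos_of_nonneg (by positivity) (div_nonneg (le_max_right A 0) (by linarith)),
    1, one_pos, fun γ hγ hγ1 W Vinf h sstar _ hup hlow hh hs hf ↦ ?_⟩
  rw [integral_Ici_eq_integral_Ioi] at hf
  -- a non-integrable integrand would have integral `0`, not `h > 0`
  have hint : IntegrableOn (fun p ↦ Vinf - W p) (Ioi sstar) := by
    by_contra hni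
    rw [integral_undef hni] at hf
    linarith
  have hIoi : ∀ p ∈ Ioi sstar, 0 ≤ p := fun p hp ↦ hs.trans (le_of_lt hp)
  refine ⟨inv_mul_log_le_of_mul_exp_div_le hCm0 hγ hh ?_,
    le_rpow_sub_one_of_le_exp_add_rpow hCp hα (le_max_right A 0) hγ.le hγ1.le hh (by linarith)
      (hKexp _ (by linarith)) ?_⟩
  · exact hf ▸ mul_exp_div_le_integral_Ioi hCm0 hint fun p hp ↦ hlow p (hIoi p hp)
  · refine hf ▸ integral_Ioi_le_exp_add_rpow hCp hα (by linarith) hint fun p hp ↦ ?_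
    have hpow : 0 < (1 + p) ^ α := rpow_pos_of_pos (by linarith [hIoi p hp]) α
    exact (hup p (hIoi p hp)).trans (by gcongr; exact le_max_left A 0)

theorem stmt15
    (Cp Cm A α : ℝ) (hCp : 0 < Cp) (hCm : Cp ≤ Cm) (hA : 0 < A) (hα : 1 < α) :
    ∃ C : ℝ, 0 < C ∧ ∃ γ₀ : ℝ, 0 < γ₀ ∧
      ∀ (γ : ℝ), 0 < γ → γ < γ₀ →
      ∀ (W : ℝ → ℝ) (Vinf h sstar : ℝ),
        Measurable W →
        (∀ p : ℝ, 0 ≤ p →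
          Vinf - W p ≤ γ * Real.exp (-Cp * p) + A * γ ^ 3 / (1 + p) ^ α) →
        (∀ p : ℝ, 0 ≤ p → γ * Real.exp (-Cm * p) ≤ Vinf - W p) →
        0 < h → 0 ≤ sstar →
        (∫ p in Set.Ici sstar, (Vinf - W p)) = h →
        (1 / Cm) * Real.log (γ / (h * Cm)) ≤ sstar ∧
          sstar ≤ (C * γ / h) ^ ((1:ℝ) / (α - 1)) - 1 :=
  stmt15_general Cp Cm A α hCp hCm hα
end

section
/- Under the hypotheses of the previous context (γ e^{-C₋ τ} ≤ V_∞ − V(τ) ≤ γ e^{-C₊ τ} + A γ³/(1+τ)³, 0 < C₊ ≤ C₋, γ small, t large), any solution s₀ ∈ (0,t) of 2V(s₀) = V̄_{s₀,t} + V₀ satisfies (1/C₋) log(3/2) ≤ s₀ ≤ (1/C₊) log 4, for γ sufficiently small and t sufficiently large. -/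
/-! Write `W = V_∞ - V` and `γ = W 0`. The threshold equation says
`W s₀ = γ / 2 + (∫ τ in s₀..t, W τ) / (2 (t - s₀))`. As `W ≥ 0`, this gives `W s₀ ≥ γ / 2`,
and the upper envelope `γ e^{-C₊ s₀} + A γ³ ≤ γ e^{-C₊ s₀} + γ / 4` forces `e^{-C₊ s₀} ≥ 1 / 4`.
Integrating the upper envelope bounds `∫ W` by `γ / C₊ + A γ³ / 2` independently of `t`, so for
`t - s₀ ≥ 3 / C₊ + 1` the averaged term is at most `γ / 6`; then `W s₀ ≤ 2γ / 3`, and the lower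
envelope forces `e^{-C₋ s₀} ≤ 2 / 3`. -/

open Real MeasureTheory Set

lemma integral_exp_neg_mul {c : ℝ} (hc : c ≠ 0) (a b : ℝ) :
    ∫ τ in a..b, exp (-c * τ) = (exp (-c * a) - exp (-c * b)) / c := by
  rw [intervalIntegral.integral_comp_mul_left (fun x => exp x) (neg_ne_zero.mpr hc),
    integral_exp, smul_eq_mul]
  field_simp
  ring

lemma integral_one_div_one_add_pow_three {a b : ℝ} (ha : -1 < a) (hb : -1 < b) :
    ∫ τ in a..b, 1 / (1 + τ) ^ 3 = (1 / (1 + a) ^ 2 - 1 / (1 + b) ^ 2) / 2 := by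
  have hzero : (0 : ℝ) ∉ uIcc (1 + a) (1 + b) := fun h => by
    rcases mem_uIcc.mp h with h | h <;> linarith [h.1, h.2]
  rw [intervalIntegral.integral_comp_add_left (fun x => 1 / x ^ 3)]
  simp only [one_div, ← zpow_natCast, ← zpow_neg, Nat.cast_ofNat]
  rw [integral_zpow (Or.inr ⟨by norm_num, hzero⟩)]
  norm_num
  ring

lemma integral_le_of_le_exp_decay_add_cubic_decay {W : ℝ → ℝ} {γ c B s t : ℝ} (hγ : 0 ≤ γ)
    (hc : 0 < c) (hB : 0 ≤ B) (hs : 0 ≤ s) (hst : s ≤ t) (hW : IntervalIntegrable W volume s t)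
    (hle : ∀ τ ∈ Icc s t, W τ ≤ γ * exp (-c * τ) + B / (1 + τ) ^ 3) :
    ∫ τ in s..t, W τ ≤ γ / c + B / 2 := by
  have hexp : IntervalIntegrable (fun τ => exp (-c * τ)) volume s t :=
    Continuous.intervalIntegrable (by fun_prop) s t
  have hcubic : IntervalIntegrable (fun τ => 1 / (1 + τ) ^ 3) volume s t := by
    refine (ContinuousOn.div continuousOn_const (by fun_prop) fun τ hτ => ?_).intervalIntegrable
    rw [uIcc_of_le hst] at hτ
    exact pow_ne_zero 3 (by linarith [hτ.1])
  calc ∫ τ in s..t, W τ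
      ≤ ∫ τ in s..t, (γ * exp (-c * τ) + B * (1 / (1 + τ) ^ 3)) :=
        intervalIntegral.integral_mono_on hst hW ((hexp.const_mul γ).add (hcubic.const_mul B))
          fun τ hτ => (hle τ hτ).trans_eq (by ring)
    _ = γ * ((exp (-c * s) - exp (-c * t)) / c)
          + B * ((1 / (1 + s) ^ 2 - 1 / (1 + t) ^ 2) / 2) := by
        rw [intervalIntegral.integral_add (hexp.const_mul γ) (hcubic.const_mul B),
          intervalIntegral.integral_const_mul, intervalIntegral.integral_const_mul,
          integral_exp_neg_mul hc.ne',
          integral_one_div_one_add_pow_three (by linarith) (by linarith)]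
    _ ≤ γ * (1 / c) + B * (1 / 2) := by
        have hs_exp : exp (-c * s) ≤ 1 := exp_le_one_iff.mpr (by nlinarith)
        have hs_cubic : 1 / (1 + s) ^ 2 ≤ 1 :=
          div_le_one_of_le₀ (one_le_pow₀ (by linarith)) (by positivity)
        have ht_exp : 0 < exp (-c * t) := exp_pos _
        have ht_cubic : 0 < 1 / (1 + t) ^ 2 := by
          have : 0 < 1 + t := by linarith
          positivity
        gcongr <;> linarith
    _ = γ / c + B / 2 := by ring

lemma sub_eq_half_add_of_two_mul_eq_average {V : ℝ → ℝ} {Vinf V₀ s t : ℝ}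
    (hV : IntervalIntegrable V volume s t) (hst : s < t)
    (h : 2 * V s = (1 / (t - s)) * (∫ τ in s..t, V τ) + V₀) :
    Vinf - V s = (Vinf - V₀) / 2 + (∫ τ in s..t, (Vinf - V τ)) / (2 * (t - s)) := by
  rw [intervalIntegral.integral_sub intervalIntegrable_const hV, intervalIntegral.integral_const,
    smul_eq_mul]
  have : t - s ≠ 0 := (sub_pos.mpr hst).ne'
  field_simp at h ⊢
  linarith

lemma le_one_div_mul_log_inv {c s r : ℝ} (hc : 0 < c) (hr : 0 < r) (h : r ≤ exp (-c * s)) :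
    s ≤ 1 / c * log r⁻¹ := by
  rw [← log_le_iff_le_exp hr] at h
  rw [log_inv, one_div_mul_eq_div, le_div_iff₀ hc]
  linarith

lemma one_div_mul_log_inv_le {c s r : ℝ} (hc : 0 < c) (hr : 0 < r) (h : exp (-c * s) ≤ r) :
    1 / c * log r⁻¹ ≤ s := by
  rw [← le_log_iff_exp_le hr] at h
  rw [log_inv, one_div_mul_eq_div, div_le_iff₀ hc]
  linarith

lemma mul_pow_three_le_quarter_of_lt_min {A γ : ℝ} (hA : 0 < A) (hγ : 0 < γ)
    (hγA : γ < min 1 (1 / (4 * A))) : A * γ ^ 3 ≤ γ / 4 := by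
  have hγ_le_one : γ ≤ 1 := (hγA.trans_le (min_le_left _ _)).le
  have hAγ : γ * (4 * A) ≤ 1 :=
    (le_div_iff₀ (by positivity)).mp (hγA.trans_le (min_le_right _ _)).le
  nlinarith [mul_le_mul_of_nonneg_left hAγ (sq_nonneg γ),
    mul_le_mul_of_nonneg_left hγ_le_one hγ.le]

section ThresholdTime

variable {W : ℝ → ℝ} {γ A s t : ℝ}

lemma le_one_div_mul_log_four_of_eq_half_add_average {c : ℝ} (hγ : 0 < γ) (hc : 0 < c)
    (hA : 0 ≤ A) (hAγ : A * γ ^ 3 ≤ γ / 4) (hs : 0 ≤ s) (hst : s < t)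
    (hW : W s = γ / 2 + (∫ τ in s..t, W τ) / (2 * (t - s)))
    (hW_nonneg : ∀ τ ∈ Icc s t, 0 ≤ W τ)
    (hup : W s ≤ γ * exp (-c * s) + A * γ ^ 3 / (1 + s) ^ 3) :
    s ≤ 1 / c * log 4 := by
  refine inv_inv (4 : ℝ) ▸ le_one_div_mul_log_inv hc (by norm_num) (le_of_mul_le_mul_left ?_ hγ)
  have hcubic : A * γ ^ 3 / (1 + s) ^ 3 ≤ A * γ ^ 3 :=
    div_le_self (by positivity) (one_le_pow₀ (by linarith))
  have hmean : 0 ≤ (∫ τ in s..t, W τ) / (2 * (t - s)) :=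
    div_nonneg (intervalIntegral.integral_nonneg hst.le hW_nonneg) (by linarith)
  linarith

lemma one_div_mul_log_three_halves_le_of_eq_half_add_average {Cp Cm : ℝ} (hγ : 0 < γ)
    (hCp : 0 < Cp) (hCm : 0 < Cm) (hA : 0 ≤ A) (hAγ : A * γ ^ 3 ≤ γ / 4) (hs : 0 ≤ s)
    (hlong : 3 / Cp + 1 ≤ t - s) (hWint : IntervalIntegrable W volume s t)
    (hW : W s = γ / 2 + (∫ τ in s..t, W τ) / (2 * (t - s)))
    (hlow : γ * exp (-Cm * s) ≤ W s)
    (hup : ∀ τ ∈ Icc s t, W τ ≤ γ * exp (-Cp * τ) + A * γ ^ 3 / (1 + τ) ^ 3) :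
    1 / Cm * log (3 / 2) ≤ s := by
  have hJ := integral_le_of_le_exp_decay_add_cubic_decay hγ.le hCp (by positivity) hs
    (by linarith [div_pos three_pos hCp]) hWint hup
  have hmean : (∫ τ in s..t, W τ) / (2 * (t - s)) ≤ γ / 6 := by
    rw [div_le_iff₀ (by linarith [div_pos three_pos hCp])]
    have : γ / 6 * (2 * (3 / Cp + 1)) = γ / Cp + γ / 3 := by field_simp; ring
    nlinarith [mul_le_mul_of_nonneg_left hlong hγ.le]
  refine (by norm_num : ((2 : ℝ) / 3)⁻¹ = 3 / 2) ▸
    one_div_mul_log_inv_le hCm (by norm_num) (le_of_mul_le_mul_left ?_ hγ)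
  linarith

end ThresholdTime

theorem stmt18
    (Cp Cm A : ℝ) (hCp : 0 < Cp) (hCm : Cp ≤ Cm) (hA : 0 < A) :
    ∃ γ₀ : ℝ, 0 < γ₀ ∧
      ∀ (Vinf V₀ : ℝ), 0 < V₀ → 0 < Vinf - V₀ → Vinf - V₀ < γ₀ →
        ∃ T : ℝ, ∀ t : ℝ, T < t →
          ∀ V : ℝ → ℝ, Continuous V → V 0 = V₀ →
            (∀ τ : ℝ, 0 ≤ τ →
              (Vinf - V₀) * Real.exp (-Cm * τ) ≤ Vinf - V τ) →
            (∀ τ : ℝ, 0 ≤ τ →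
              Vinf - V τ ≤ (Vinf - V₀) * Real.exp (-Cp * τ)
                + A * (Vinf - V₀) ^ 3 / (1 + τ) ^ 3) →
            ∀ s₀ ∈ Set.Ioo (0:ℝ) t,
              2 * V s₀ = (1 / (t - s₀)) * (∫ τ in s₀..t, V τ) + V₀ →
              (1 / Cm) * Real.log (3 / 2) ≤ s₀ ∧ s₀ ≤ (1 / Cp) * Real.log 4 := by
  refine ⟨min 1 (1 / (4 * A)), by positivity, fun Vinf V₀ _ hγ hγ₀ => ?_⟩
  have hAγ := mul_pow_three_le_quarter_of_lt_min hA hγ hγ₀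
  refine ⟨(log 4 + 3) / Cp + 1, fun t ht V hV _ hlow hup s₀ ⟨hs₀, hs₀t⟩ heq => ?_⟩
  have hW := sub_eq_half_add_of_two_mul_eq_average (Vinf := Vinf) (hV.intervalIntegrable _ _)
    hs₀t heq
  have hupper : s₀ ≤ 1 / Cp * log 4 :=
    le_one_div_mul_log_four_of_eq_half_add_average hγ hCp hA.le hAγ hs₀.le hs₀t hW
      (fun τ hτ => le_trans (by positivity) (hlow τ (hs₀.le.trans hτ.1))) (hup s₀ hs₀.le)
  have hlong : 3 / Cp + 1 ≤ t - s₀ := by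
    have : (log 4 + 3) / Cp = 1 / Cp * log 4 + 3 / Cp := by ring
    linarith
  exact ⟨one_div_mul_log_three_halves_le_of_eq_half_add_average hγ hCp (hCp.trans_le hCm)
    hA.le hAγ hs₀.le hlong ((continuous_const.sub hV).intervalIntegrable _ _) hW
    (hlow s₀ hs₀.le) fun τ hτ => hup τ (hs₀.le.trans hτ.1), hupper⟩
end
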